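/- arXiv:0712.2871 — 2 statements merged into one kernel-verified Lean document; each statement's English description precedes it below -/
import Mathlib

section
/- Let (W,S) be a Coxeter system with S finite such that for every proper subset I ⊊ S the standard parabolic subgroup W_I is finite, and let J ⊆ S. If there are infinitely many elements w ∈ W^J whose lower order ideal {u ∈ W^J : u ≤ w} is a chain in the Bruhat order, then the Bruhat order restricted to W^J is a total order. -/
/-!
If all proper standard parabolic subgroups are finite, their lengths are bounded by some `C`, so
every reduced word of length `> C` contains every generator. Reading a reduced word for `x` in
blocks of `C + 1` letters, each block contains every generator, so any word of length `k` is a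
subword once `k * (C + 1) ≤ ℓ(x)`: every `v` with `ℓ(v) * (C + 1) ≤ ℓ(x)` lies below `x` in the
Bruhat order. Infinitely many chain elements of `W^J` include arbitrarily long ones, so any two
elements of `W^J` lie below a common one whose lower ideal in `W^J` is a chain.
-/

/-- The Bruhat order on a Coxeter group: `u ≤ w` iff some reduced word for `w`
has a sublist (subword) which is a reduced word for `u`. -/
def CoxeterSystem.bruhatLE {B W : Type*} [Group W] {M : CoxeterMatrix B}
    (cs : CoxeterSystem M W) (u w : W) : Prop :=
  ∃ ω : List B, cs.IsReduced ω ∧ cs.wordProd ω = w ∧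
    ∃ ω' : List B, ω'.Sublist ω ∧ cs.IsReduced ω' ∧ cs.wordProd ω' = u

/-- `w` is a minimal length representative of its coset `w W_J`. -/
def CoxeterSystem.IsMinimalRep {B W : Type*} [Group W] {M : CoxeterMatrix B}
    (cs : CoxeterSystem M W) (J : Set B) (w : W) : Prop :=
  ∀ u ∈ Subgroup.closure (cs.simple '' J), cs.length w ≤ cs.length (w * u)

theorem List.sublist_of_forall_infix_mem {α : Type*} {C : ℕ} :
    ∀ (ρ ω : List α), (∀ τ, τ <:+: ω → C < τ.length → ∀ a, a ∈ τ) →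
      ρ.length * (C + 1) ≤ ω.length → ρ.Sublist ω
  | [], ω, _, _ => List.nil_sublist ω
  | a :: ρ, ω, hω, hlen => by
    rw [List.length_cons, Nat.succ_mul] at hlen
    have hblock : a ∈ ω.take (C + 1) :=
      hω _ (ω.take_prefix _).isInfix (by rw [List.length_take]; omega) a
    obtain ⟨n, hn, rfl⟩ := List.mem_iff_getElem.mp hblock
    rw [List.length_take, lt_min_iff] at hn
    have hrest : ρ.Sublist (ω.drop (n + 1)) :=
      List.sublist_of_forall_infix_mem ρ _
        (fun τ hτ => hω τ (hτ.trans (ω.drop_suffix _).isInfix))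
        (by rw [List.length_drop]; omega)
    rw [List.getElem_take]
    refine (hrest.cons_cons _).trans ?_
    rw [← List.drop_eq_getElem_cons hn.2]
    exact ω.drop_sublist n

namespace CoxeterSystem

variable {B W : Type*} [Group W] {M : CoxeterMatrix B} (cs : CoxeterSystem M W)

theorem IsReduced.infix {cs : CoxeterSystem M W} {ω τ : List B} (hω : cs.IsReduced ω) (hτ : τ <:+: ω) :
    cs.IsReduced τ := by
  obtain ⟨s, t, rfl⟩ := hτ
  simpa using (hω.drop s.length).take τ.length

theorem wordProd_mem_closure_simple_image {I : Set B} {ω : List B} (h : ∀ b ∈ ω, b ∈ I) :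
    cs.wordProd ω ∈ Subgroup.closure (cs.simple '' I) :=
  list_prod_mem fun _ hx => by
    obtain ⟨b, hb, rfl⟩ := List.mem_map.mp hx
    exact Subgroup.subset_closure ⟨b, h b hb, rfl⟩

theorem exists_forall_mem_of_isReduced_of_lt_length [Finite B]
    (hpar : ∀ I : Set B, I ≠ Set.univ →
      ((Subgroup.closure (cs.simple '' I) : Subgroup W) : Set W).Finite) :
    ∃ C : ℕ, ∀ ω : List B, cs.IsReduced ω → C < ω.length → ∀ b, b ∈ ω := by
  have hfin : (⋃ b : B, ((Subgroup.closure (cs.simple '' {b}ᶜ) : Subgroup W) : Set W)).Finite :=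
    Set.finite_iUnion fun b => hpar _ (Set.compl_ne_univ.mpr (Set.singleton_nonempty b))
  obtain ⟨C, hC⟩ := (hfin.image cs.length).bddAbove
  refine ⟨C, fun ω hω hlen b => ?_⟩
  by_contra hb
  have hmem : cs.wordProd ω ∈ Subgroup.closure (cs.simple '' {b}ᶜ) :=
    cs.wordProd_mem_closure_simple_image fun c hc hcb => hb (hcb ▸ hc)
  have : ω.length ≤ C := hω.eq ▸ hC ⟨_, Set.mem_iUnion.mpr ⟨b, hmem⟩, rfl⟩
  omega

theorem bruhatLE_of_length_mul_le {C : ℕ}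
    (hC : ∀ ω : List B, cs.IsReduced ω → C < ω.length → ∀ b, b ∈ ω)
    {v x : W} (hvx : cs.length v * (C + 1) ≤ cs.length x) : cs.bruhatLE v x := by
  obtain ⟨ρ, hρ, rfl⟩ := cs.exists_isReduced v
  obtain ⟨ω, hω, rfl⟩ := cs.exists_isReduced x
  refine ⟨ω, hω, rfl, ρ, List.sublist_of_forall_infix_mem (C := C) ρ ω ?_ ?_, hρ, rfl⟩
  · exact fun τ hτ => hC τ (hω.infix hτ)
  · rwa [← hρ.eq, ← hω.eq]

theorem finite_setOf_length_le [Finite B] (N : ℕ) : {w : W | cs.length w ≤ N}.Finite := by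
  refine ((List.finite_length_le B N).image cs.wordProd).subset fun w hw => ?_
  obtain ⟨ω, hω, rfl⟩ := cs.exists_isReduced w
  exact ⟨ω, show ω.length ≤ N from hω.eq ▸ hw, rfl⟩

end CoxeterSystem

/-- If every proper standard parabolic subgroup is finite, and there are infinitely many
elements of `W^J` whose lower order ideal within `W^J` is a chain in the Bruhat order,
then the Bruhat order restricted to `W^J` is a total order. -/
theorem bruhat_total_on_minimal_reps_of_infinitely_many_chains
    {B W : Type*} [Group W] [Finite B] {M : CoxeterMatrix B} (cs : CoxeterSystem M W)
    (hpar : ∀ I : Set B, I ≠ Set.univ →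
      ((Subgroup.closure (cs.simple '' I) : Subgroup W) : Set W).Finite)
    (J : Set B)
    (hinf : {w : W | cs.IsMinimalRep J w ∧
      ∀ u u' : W, cs.IsMinimalRep J u → cs.bruhatLE u w →
        cs.IsMinimalRep J u' → cs.bruhatLE u' w →
          cs.bruhatLE u u' ∨ cs.bruhatLE u' u}.Infinite) :
    ∀ u w : W, cs.IsMinimalRep J u → cs.IsMinimalRep J w →
      cs.bruhatLE u w ∨ cs.bruhatLE w u := by
  intro u w hu hw
  obtain ⟨C, hC⟩ := cs.exists_forall_mem_of_isReduced_of_lt_length hpar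
  let m := max (cs.length u) (cs.length w)
  obtain ⟨x, ⟨-, hchain⟩, hlong⟩ :=
    (hinf.sdiff (cs.finite_setOf_length_le (m * (C + 1)))).nonempty
  have hbelow : ∀ v, cs.length v ≤ m → cs.bruhatLE v x := fun v hv =>
    cs.bruhatLE_of_length_mul_le hC ((Nat.mul_le_mul_right _ hv).trans (not_le.mp hlong).le)
  exact hchain u w hu (hbelow u (le_max_left _ _)) hw (hbelow w (le_max_right _ _))
end

section
/- Let Φ be an irreducible finite reduced crystallographic root system with positive system Φ^+ and highest root α_0, and let λ be a coweight. Then ℓ^S(r_{α_0} λ) = ℓ^S(λ) − 1 if α_0(λ) > 1; r_{α_0} λ = λ (so ℓ^S(r_{α_0} λ) = ℓ^S(λ)) if α_0(λ) = 1; and ℓ^S(r_{α_0} λ) = ℓ^S(λ) + 1 if α_0(λ) < 1. -/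
open Module

/-- A finite reduced crystallographic root system, spanning the dual of the real vector
space `V`, together with a chosen positive system.  Roots are linear functionals on `V`,
and `coroot` associates to each root its coroot in `V`. -/
structure PosRootSystem (V : Type*) [AddCommGroup V] [Module ℝ V] where
  /-- the set of roots -/
  roots : Finset (Dual ℝ V)
  /-- the set of positive roots -/
  pos : Finset (Dual ℝ V)
  /-- the coroot of a root -/
  coroot : Dual ℝ V → V
  pos_subset : pos ⊆ roots
  mem_roots_iff : ∀ α, α ∈ roots ↔ (α ∈ pos ∨ -α ∈ pos)
  neg_not_pos : ∀ α ∈ pos, -α ∉ pos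
  add_mem_pos : ∀ α ∈ pos, ∀ β ∈ pos, α + β ∈ roots → α + β ∈ pos
  root_coroot_two : ∀ α ∈ roots, α (coroot α) = 2
  crystallographic : ∀ α ∈ roots, ∀ β ∈ roots, ∃ n : ℤ, α (coroot β) = n
  reduced : ∀ α ∈ roots, ∀ c : ℝ, c • α ∈ roots → c = 1 ∨ c = -1
  reflect_mem : ∀ α ∈ roots, ∀ β ∈ roots, α - α (coroot β) • β ∈ roots
  span_top : Submodule.span ℝ (roots : Set (Dual ℝ V)) = ⊤

namespace PosRootSystem

variable {V : Type*} [AddCommGroup V] [Module ℝ V] (P : PosRootSystem V)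

/-- `x` is a coweight: every root takes an integer value on it. -/
def IsCoweight (x : V) : Prop := ∀ α ∈ P.roots, ∃ n : ℤ, α x = n

/-- The function `f(m) = -m` for `m ≤ 0` and `f(m) = m - 1` for `m > 0`. -/
noncomputable def lenAux (m : ℝ) : ℝ := if m ≤ 0 then -m else m - 1

/-- `ℓ^S(x) = Σ_{α ∈ Φ⁺} f(α(x))`, the length of the minimal coset representative of the
translation `x` in the affine Weyl group modulo the finite Weyl group. -/
noncomputable def lS (x : V) : ℝ := ∑ α ∈ P.pos, lenAux (α x)

/-- The linear reflection `s_β x = x - β(x)·β^∨`. -/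
def sRefl (β : Dual ℝ V) (x : V) : V := x - β x • P.coroot β

/-- The affine reflection `r_β x = s_β x + β^∨` in the hyperplane `β = 1`. -/
def rRefl (β : Dual ℝ V) (x : V) : V := P.sRefl β x + P.coroot β

/-- `(α, α')` is a `β`-positive pair: `α, α'` are positive roots with `α(β^∨) < 0`
and `s_β α = α'`. -/
def IsPosPair (β α α' : Dual ℝ V) : Prop :=
  α ∈ P.pos ∧ α' ∈ P.pos ∧ α (P.coroot β) < 0 ∧ α - α (P.coroot β) • β = α'

/-- `(α, α')` is a `β`-negative pair: `α, α'` are positive roots with `s_β α = -α'`. -/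
def IsNegPair (β α α' : Dual ℝ V) : Prop :=
  α ∈ P.pos ∧ α' ∈ P.pos ∧ α - α (P.coroot β) • β = -α'

/-- The opposite sign condition for `(β, x)`: the two members of every `β`-negative pair
take values of strictly opposite signs on `x`. -/
def OppositeSignCondition (β : Dual ℝ V) (x : V) : Prop :=
  ∀ α α' : Dual ℝ V, P.IsNegPair β α α' →
    (α x < 0 ∧ 0 < α' x) ∨ (0 < α x ∧ α' x < 0)

end PosRootSystem

/-- `θ` is the highest root: `θ` is a positive root and `θ − α` is a nonnegative
combination of positive roots for every root `α`.  (For a finite reduced crystallographic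
root system this holds precisely when the system is irreducible and `θ` is its highest
root.) -/
def PosRootSystem.IsHighestRoot {V : Type*} [AddCommGroup V] [Module ℝ V]
    (P : PosRootSystem V) (θ : Module.Dual ℝ V) : Prop :=
  θ ∈ P.pos ∧ ∀ α ∈ P.roots,
    θ - α ∈ AddSubmonoid.closure (P.pos : Set (Module.Dual ℝ V))

/-!
Write `c(α) = α(θ^∨)`. Every root lies below `θ` in the cone spanned by `Φ⁺`, and this cone is
salient; applied to `s_θ α` this forces `c(α) ∈ {0, 1}` for every positive root `α ≠ θ`, and
`θ - α ∈ Φ⁺` when `c(α) = 1`. Since `α(r_θ λ) = α(λ) + (1 - θ(λ)) c(α)`, the roots with `c(α) = 0`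
keep their value, while `α ↦ θ - α` permutes those with `c(α) = 1` and turns `α(r_θ λ)` into
`1 - (θ - α)(λ)`. As `f(1 - m) = f(m)`, only the term of `θ` changes, from `f(θ(λ))` to
`f(θ(λ) - 1)`.

Salience holds because two positive roots with negative pairing can be merged into their sum,
which is a root by the rank-two bound `0 < α(β^∨) β(α^∨) < 4`; that bound holds because otherwise
the orbit of `β` under `s_α s_β` would be infinite.
-/

theorem strictMono_abs_of_recurrence {a : ℕ → ℝ} {t : ℝ} (ht : 2 ≤ |t|)
    (hrec : ∀ n, a (n + 2) = t * a (n + 1) - a n) (h01 : |a 0| < |a 1|) :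
    StrictMono fun n => |a n| := by
  have hgap : ∀ n, |a 1| - |a 0| ≤ |a (n + 1)| - |a n| := by
    intro n
    induction n with
    | zero => exact le_rfl
    | succ n ih =>
      have h1 : |t * a (n + 1)| - |a n| ≤ |a (n + 2)| := by
        rw [hrec n]
        exact abs_sub_abs_le_abs_sub _ _
      have h2 : 2 * |a (n + 1)| ≤ |t * a (n + 1)| := by
        rw [abs_mul]
        exact mul_le_mul_of_nonneg_right ht (abs_nonneg _)
      linarith
  exact strictMono_nat_of_lt_succ fun n => by linarith [hgap n]

namespace PosRootSystem

variable {V : Type*} [AddCommGroup V] [Module ℝ V] (P : PosRootSystem V)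

theorem root_ne_zero {α : Dual ℝ V} (hα : α ∈ P.roots) : α ≠ 0 := by
  rintro rfl
  simpa using P.root_coroot_two 0 hα

theorem neg_mem_roots {α : Dual ℝ V} (hα : α ∈ P.roots) : -α ∈ P.roots := by
  rw [P.mem_roots_iff, neg_neg]
  exact ((P.mem_roots_iff α).mp hα).symm

/-- If `α(β^∨) = p` and `β(α^∨) = q`, then `(s_α s_β)ⁿ β = a • α + b • β` with
`(a, b) = rank2OrbitCoeff p q n`. -/
noncomputable def rank2OrbitCoeff (p q : ℝ) : ℕ → ℝ × ℝ
  | 0 => (0, 1)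
  | n + 1 =>
    ((p * q - 1) * (rank2OrbitCoeff p q n).1 + q * (rank2OrbitCoeff p q n).2,
      -p * (rank2OrbitCoeff p q n).1 - (rank2OrbitCoeff p q n).2)

theorem rank2OrbitCoeff_fst_add_two (p q : ℝ) (n : ℕ) :
    (rank2OrbitCoeff p q (n + 2)).1 =
      (p * q - 2) * (rank2OrbitCoeff p q (n + 1)).1 - (rank2OrbitCoeff p q n).1 := by
  simp only [rank2OrbitCoeff]
  ring

theorem rank2OrbitCoeff_mem_roots {α β : Dual ℝ V} (hα : α ∈ P.roots) (hβ : β ∈ P.roots)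
    (n : ℕ) :
    (rank2OrbitCoeff (α (P.coroot β)) (β (P.coroot α)) n).1 • α +
      (rank2OrbitCoeff (α (P.coroot β)) (β (P.coroot α)) n).2 • β ∈ P.roots := by
  induction n with
  | zero => simpa [rank2OrbitCoeff] using hβ
  | succ n ih =>
    convert P.reflect_mem _ (P.reflect_mem _ ih β hβ) α hα using 1
    simp only [rank2OrbitCoeff, LinearMap.add_apply, LinearMap.sub_apply,
      LinearMap.smul_apply, smul_eq_mul, P.root_coroot_two α hα,
      P.root_coroot_two β hβ]
    module

theorem pairing_mul_pos_and_lt_four {α β : Dual ℝ V} (hα : α ∈ P.roots) (hβ : β ∈ P.roots)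
    (hne : α ≠ β) (hne' : α ≠ -β) (hq : β (P.coroot α) ≠ 0) :
    0 < α (P.coroot β) * β (P.coroot α) ∧ α (P.coroot β) * β (P.coroot α) < 4 := by
  set c := rank2OrbitCoeff (α (P.coroot β)) (β (P.coroot α))
  by_contra hpq
  have ht : 2 ≤ |α (P.coroot β) * β (P.coroot α) - 2| := by
    rcases not_and_or.mp hpq with h | h
    · rw [abs_of_nonpos] <;> linarith
    · rw [abs_of_nonneg] <;> linarith
  have hmono : StrictMono fun n => |(c n).1| :=
    strictMono_abs_of_recurrence ht (rank2OrbitCoeff_fst_add_two _ _)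
      (by simpa [c, rank2OrbitCoeff] using hq)
  have hinj : Function.Injective fun n => (c n).1 • α + (c n).2 • β := by
    intro m n hmn
    by_contra hmn'
    have hsub : (c m).1 - (c n).1 ≠ 0 :=
      sub_ne_zero.mpr fun h => hmn' (hmono.injective (by simp only [h]))
    have hαβ : α = (((c m).1 - (c n).1)⁻¹ * ((c n).2 - (c m).2)) • β := by
      rw [mul_smul, eq_inv_smul_iff₀ hsub]
      linear_combination (norm := module) hmn
    rcases P.reduced β hβ _ (hαβ ▸ hα) with h | h <;> rw [h] at hαβ
    · exact hne (hαβ.trans (one_smul ℝ β))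
    · exact hne' (hαβ.trans (by module))
  exact Set.infinite_of_injective_forall_mem hinj
    (fun n => Finset.mem_coe.mpr (P.rank2OrbitCoeff_mem_roots hα hβ n)) P.roots.finite_toSet

theorem add_mem_roots_of_pairing_neg {α β : Dual ℝ V} (hα : α ∈ P.roots) (hβ : β ∈ P.roots)
    (hne : β ≠ -α) (hneg : β (P.coroot α) < 0) : α + β ∈ P.roots := by
  obtain ⟨p, hp⟩ := P.crystallographic α hα β hβ
  obtain ⟨q, hq⟩ := P.crystallographic β hβ α hα
  have hne' : α ≠ β := by
    rintro rfl
    linarith [P.root_coroot_two α hα]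
  have hbound := P.pairing_mul_pos_and_lt_four hα hβ hne' (fun h => hne (by rw [h, neg_neg]))
    hneg.ne
  rw [hp, hq] at hbound
  rw [hq] at hneg
  have hq0 : q < 0 := by exact_mod_cast hneg
  have hpq : 0 < p * q ∧ p * q < 4 := by exact_mod_cast hbound
  rcases (by omega : q = -1 ∨ q ≤ -2) with hq1 | hq2
  · convert P.reflect_mem β hβ α hα using 1
    rw [hq, hq1]
    push_cast
    module
  · have hp1 : p = -1 := by nlinarith
    convert P.reflect_mem α hα β hβ using 1
    rw [hp, hp1]
    push_cast
    module

theorem add_mem_pos_of_pairing_neg {α β : Dual ℝ V} (hα : α ∈ P.pos) (hβ : β ∈ P.pos)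
    (hneg : β (P.coroot α) < 0) : α + β ∈ P.pos :=
  P.add_mem_pos α hα β hβ <| P.add_mem_roots_of_pairing_neg (P.pos_subset hα)
    (P.pos_subset hβ) (fun h => P.neg_not_pos α hα (h ▸ hβ)) hneg

theorem multiset_eq_zero_of_sum_eq_zero {M : Multiset (Dual ℝ V)} (hM : ∀ α ∈ M, α ∈ P.pos)
    (hsum : M.sum = 0) : M = 0 := by
  induction hn : M.card using Nat.strong_induction_on generalizing M with
  | _ n ih =>
    by_contra hM0
    obtain ⟨α, hαM⟩ := Multiset.exists_mem_of_ne_zero hM0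
    obtain ⟨M₁, rfl⟩ := Multiset.exists_cons_of_mem hαM
    have hα := hM α (Multiset.mem_cons_self _ _)
    obtain ⟨β, hβM, hβ⟩ : ∃ β ∈ M₁, β (P.coroot α) < 0 := by
      by_contra! h
      have h2 : 2 + (M₁.map fun β => β (P.coroot α)).sum = 0 := by
        have h := congrArg (LinearMap.applyₗ (R := ℝ) (P.coroot α)) hsum
        rw [map_multiset_sum] at h
        simpa [P.root_coroot_two α (P.pos_subset hα)] using h
      have h3 := Multiset.sum_nonneg fun y hy => by
        obtain ⟨β, hβ, rfl⟩ := Multiset.mem_map.mp hy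
        exact h β hβ
      linarith
    obtain ⟨M₂, rfl⟩ := Multiset.exists_cons_of_mem hβM
    refine Multiset.cons_ne_zero
      (ih (M₂.card + 1) (by simp [← hn]) (M := (α + β) ::ₘ M₂) ?_ ?_ (by simp))
    · intro γ hγ
      rcases Multiset.mem_cons.mp hγ with rfl | hγ
      · exact P.add_mem_pos_of_pairing_neg hα (hM β (by simp)) hβ
      · exact hM γ (by simp [hγ])
    · simpa [add_assoc] using hsum

theorem eq_zero_of_mem_closure_pos_of_neg_mem {x : Dual ℝ V}
    (hx : x ∈ AddSubmonoid.closure (P.pos : Set (Dual ℝ V)))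
    (hx' : -x ∈ AddSubmonoid.closure (P.pos : Set (Dual ℝ V))) : x = 0 := by
  obtain ⟨M, hM, rfl⟩ := AddSubmonoid.exists_multiset_of_mem_closure hx
  obtain ⟨M', hM', hM'sum⟩ := AddSubmonoid.exists_multiset_of_mem_closure hx'
  have h0 := P.multiset_eq_zero_of_sum_eq_zero (M := M + M')
    (fun α h => (Multiset.mem_add.mp h).elim (hM α) (hM' α))
    (by rw [Multiset.sum_add, hM'sum, add_neg_cancel])
  rw [(add_eq_zero.mp h0).1, Multiset.sum_zero]

theorem apply_rRefl (β α : Dual ℝ V) (x : V) :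
    α (P.rRefl β x) = α x + (1 - β x) * α (P.coroot β) := by
  simp only [rRefl, sRefl, map_add, map_sub, map_smul, smul_eq_mul]
  ring

theorem lenAux_one_sub_intCast (n : ℤ) : lenAux (1 - n) = lenAux n := by
  rcases le_or_gt n 0 with h | h
  · have h' : (n : ℝ) ≤ 0 := by exact_mod_cast h
    simp only [lenAux, if_neg (by linarith : ¬1 - (n : ℝ) ≤ 0), if_pos h']
    ring
  · have h' : (1 : ℝ) ≤ n := by exact_mod_cast h
    simp only [lenAux, if_pos (by linarith : 1 - (n : ℝ) ≤ 0),
      if_neg (by linarith : ¬(n : ℝ) ≤ 0)]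
    ring

theorem lenAux_sub_one_of_two_le {m : ℝ} (h : 2 ≤ m) : lenAux (m - 1) = lenAux m - 1 := by
  simp only [lenAux, if_neg (by linarith : ¬m - 1 ≤ 0), if_neg (by linarith : ¬m ≤ 0)]

theorem lenAux_sub_one_of_nonpos {m : ℝ} (h : m ≤ 0) : lenAux (m - 1) = lenAux m + 1 := by
  simp only [lenAux, if_pos (by linarith : m - 1 ≤ 0), if_pos h]
  ring

namespace IsHighestRoot

variable {P} {θ : Dual ℝ V}

theorem pairing_nonneg (hθ : P.IsHighestRoot θ) {α : Dual ℝ V} (hα : α ∈ P.pos) :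
    0 ≤ α (P.coroot θ) := by
  have hθR := P.pos_subset hθ.1
  obtain ⟨m, hm⟩ := P.crystallographic α (P.pos_subset hα) θ hθR
  by_contra! hneg
  obtain ⟨k, hk⟩ : ∃ k : ℕ, (k : ℤ) = -1 - m := by
    rw [hm] at hneg
    exact ⟨_, Int.toNat_of_nonneg (by linarith [(by exact_mod_cast hneg : m < 0)])⟩
  -- `-α = (θ - s_θ α) + k • θ`
  have hmem : -α ∈ AddSubmonoid.closure (P.pos : Set (Dual ℝ V)) := by
    convert add_mem (hθ.2 _ (P.reflect_mem α (P.pos_subset hα) θ hθR))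
      (nsmul_mem (AddSubmonoid.subset_closure hθ.1) k) using 1
    rw [hm, ← Nat.cast_smul_eq_nsmul ℝ, (by exact_mod_cast hk : (k : ℝ) = -1 - m)]
    module
  exact P.root_ne_zero (P.pos_subset hα)
    (P.eq_zero_of_mem_closure_pos_of_neg_mem (AddSubmonoid.subset_closure hα) hmem)

theorem pairing_le_one (hθ : P.IsHighestRoot θ) {α : Dual ℝ V} (hα : α ∈ P.pos) (hne : α ≠ θ) :
    α (P.coroot θ) ≤ 1 := by
  have hθR := P.pos_subset hθ.1
  obtain ⟨m, hm⟩ := P.crystallographic α (P.pos_subset hα) θ hθR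
  by_contra! hgt
  obtain ⟨k, hk⟩ : ∃ k : ℕ, (k : ℤ) = m - 2 := by
    rw [hm] at hgt
    exact ⟨_, Int.toNat_of_nonneg (by linarith [(by exact_mod_cast hgt : (1 : ℤ) < m)])⟩
  -- `α - θ = (θ - (-s_θ α)) + k • θ`
  have hmem : -(θ - α) ∈ AddSubmonoid.closure (P.pos : Set (Dual ℝ V)) := by
    convert add_mem (hθ.2 _ (P.neg_mem_roots (P.reflect_mem α (P.pos_subset hα) θ hθR)))
      (nsmul_mem (AddSubmonoid.subset_closure hθ.1) k) using 1
    rw [hm, ← Nat.cast_smul_eq_nsmul ℝ, (by exact_mod_cast hk : (k : ℝ) = m - 2)]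
    module
  exact hne (sub_eq_zero.mp
    (P.eq_zero_of_mem_closure_pos_of_neg_mem (hθ.2 α (P.pos_subset hα)) hmem)).symm

theorem pairing_eq_zero_or_one (hθ : P.IsHighestRoot θ) {α : Dual ℝ V} (hα : α ∈ P.pos)
    (hne : α ≠ θ) : α (P.coroot θ) = 0 ∨ α (P.coroot θ) = 1 := by
  obtain ⟨m, hm⟩ := P.crystallographic α (P.pos_subset hα) θ (P.pos_subset hθ.1)
  have h0 := hθ.pairing_nonneg hα
  have h1 := hθ.pairing_le_one hα hne
  rw [hm] at h0 h1 ⊢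
  have : m = 0 ∨ m = 1 := by
    have := (by exact_mod_cast h0 : 0 ≤ m)
    have := (by exact_mod_cast h1 : m ≤ 1)
    omega
  rcases this with rfl | rfl <;> simp

theorem sub_mem_pos (hθ : P.IsHighestRoot θ) {α : Dual ℝ V} (hα : α ∈ P.pos)
    (h1 : α (P.coroot θ) = 1) : θ - α ∈ P.pos := by
  have hθR := P.pos_subset hθ.1
  have hR := P.reflect_mem α (P.pos_subset hα) θ hθR
  rw [h1, one_smul] at hR
  rcases (P.mem_roots_iff _).mp hR with hpos | hneg
  · have := hθ.pairing_nonneg hpos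
    rw [LinearMap.sub_apply, h1, P.root_coroot_two θ hθR] at this
    norm_num at this
  · rwa [neg_sub] at hneg

theorem sum_erase_lenAux_rRefl [DecidableEq (Dual ℝ V)] (hθ : P.IsHighestRoot θ) {x : V}
    (hx : P.IsCoweight x) :
    ∑ α ∈ P.pos.erase θ, lenAux (α (P.rRefl θ x)) = ∑ α ∈ P.pos.erase θ, lenAux (α x) := by
  have hθR := P.pos_subset hθ.1
  obtain ⟨T, hT⟩ := hx θ hθR
  set S₁ := (P.pos.erase θ).filter fun α => ¬α (P.coroot θ) = 0
  have hS₁ : ∀ α ∈ S₁, α ∈ P.pos ∧ α (P.coroot θ) = 1 := by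
    intro α hα
    obtain ⟨⟨hne, hα⟩, h0⟩ := Finset.mem_filter.mp hα |>.imp_left Finset.mem_erase.mp
    exact ⟨hα, (hθ.pairing_eq_zero_or_one hα hne).resolve_left h0⟩
  have hmaps : ∀ α ∈ S₁, θ - α ∈ S₁ := by
    intro α hα
    obtain ⟨hα, h1⟩ := hS₁ α hα
    have h1' : (θ - α) (P.coroot θ) = 1 := by
      rw [LinearMap.sub_apply, h1, P.root_coroot_two θ hθR]
      norm_num
    refine Finset.mem_filter.mpr ⟨Finset.mem_erase.mpr ⟨?_, hθ.sub_mem_pos hα h1⟩, by simp [h1']⟩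
    exact fun h => P.root_ne_zero (P.pos_subset hα) (sub_eq_self.mp h)
  rw [← Finset.sum_filter_add_sum_filter_not _ (fun α => α (P.coroot θ) = 0),
    ← Finset.sum_filter_add_sum_filter_not (P.pos.erase θ) (fun α => α (P.coroot θ) = 0)]
  congr 1
  · refine Finset.sum_congr rfl fun α hα => ?_
    rw [P.apply_rRefl, (Finset.mem_filter.mp hα).2, mul_zero, add_zero]
  · refine Finset.sum_nbij' (θ - ·) (θ - ·) hmaps hmaps (fun _ _ => sub_sub_cancel _ _)
      (fun _ _ => sub_sub_cancel _ _) fun α hα => ?_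
    obtain ⟨A, hA⟩ := hx α (P.pos_subset (hS₁ α hα).1)
    have h := lenAux_one_sub_intCast (T - A)
    push_cast at h
    rw [P.apply_rRefl, (hS₁ α hα).2, LinearMap.sub_apply, hT, hA, ← h]
    ring_nf

theorem lS_rRefl (hθ : P.IsHighestRoot θ) {x : V} (hx : P.IsCoweight x) :
    P.lS (P.rRefl θ x) = P.lS x + (lenAux (θ x - 1) - lenAux (θ x)) := by
  classical
  have hθR := P.pos_subset hθ.1
  obtain ⟨T, hT⟩ := hx θ hθR
  have hθx : lenAux (θ (P.rRefl θ x)) = lenAux (θ x - 1) := by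
    have h := lenAux_one_sub_intCast (T - 1)
    push_cast at h
    rw [P.apply_rRefl, P.root_coroot_two θ hθR, hT, ← h]
    ring_nf
  rw [lS, lS, ← Finset.add_sum_erase _ _ hθ.1, ← Finset.add_sum_erase _ _ hθ.1,
    hθ.sum_erase_lenAux_rRefl hx, hθx]
  ring

end IsHighestRoot

end PosRootSystem

/-- For the highest root `α₀` of an irreducible system: `ℓ^S(r_{α₀} λ) = ℓ^S(λ) − 1` if
`α₀(λ) > 1`; `r_{α₀} λ = λ` if `α₀(λ) = 1`; and `ℓ^S(r_{α₀} λ) = ℓ^S(λ) + 1` if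
`α₀(λ) < 1`. -/
theorem lS_rRefl_highest {V : Type*} [AddCommGroup V] [Module ℝ V]
    (P : PosRootSystem V) (θ : Module.Dual ℝ V) (hθ : P.IsHighestRoot θ) (x : V)
    (hx : P.IsCoweight x) :
    (1 < θ x → P.lS (P.rRefl θ x) = P.lS x - 1) ∧
    (θ x = 1 → P.rRefl θ x = x) ∧
    (θ x < 1 → P.lS (P.rRefl θ x) = P.lS x + 1) := by
  obtain ⟨T, hT⟩ := hx θ (P.pos_subset hθ.1)
  refine ⟨fun h => ?_, fun h => ?_, fun h => ?_⟩
  · have h2 : 2 ≤ θ x := by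
      rw [hT] at h ⊢
      exact_mod_cast (by exact_mod_cast h : (1 : ℤ) < T)
    rw [hθ.lS_rRefl hx, PosRootSystem.lenAux_sub_one_of_two_le h2]
    ring
  · simp [PosRootSystem.rRefl, PosRootSystem.sRefl, h]
  · have h0 : θ x ≤ 0 := by
      rw [hT] at h ⊢
      norm_cast at h ⊢
      omega
    rw [hθ.lS_rRefl hx, PosRootSystem.lenAux_sub_one_of_nonpos h0]
    ring
end
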